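/- For any finite ¬-free nested programs P and Q, P and Q are strongly equivalent if and only if the classical propositional formula pl(P) ≢ pl(Q) is unsatisfiable, where pl(·) is the two-copy classical translation. -/

import Mathlib

open scoped Classical

inductive Lit where
  | pos : ℕ → Lit
  | neg : ℕ → Lit
deriving DecidableEq

inductive Fml where
  | bot : Fml
  | top : Fml
  | lit : Lit → Fml
  | not : Fml → Fml
  | conj : Fml → Fml → Fml
  | disj : Fml → Fml → Fml
deriving DecidableEq

structure Rule where
  head : Fml
  body : Fml
deriving DecidableEq

abbrev Prog := Set Rule

/-- A set of literals is consistent if it contains no complementary pair. -/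
def Consistent (X : Set Lit) : Prop :=
  ∀ a : ℕ, ¬ (Lit.pos a ∈ X ∧ Lit.neg a ∈ X)

def Sat (X : Set Lit) : Fml → Prop
  | Fml.bot => False
  | Fml.top => True
  | Fml.lit l => l ∈ X
  | Fml.not F => ¬ Sat X F
  | Fml.conj F G => Sat X F ∧ Sat X G
  | Fml.disj F G => Sat X F ∨ Sat X G

def SatRule (X : Set Lit) (r : Rule) : Prop := Sat X r.body → Sat X r.head

def SatProg (X : Set Lit) (P : Prog) : Prop := ∀ r ∈ P, SatRule X r

/-- The reduct of a formula relative to X. -/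
noncomputable def Reduct (X : Set Lit) : Fml → Fml
  | Fml.bot => Fml.bot
  | Fml.top => Fml.top
  | Fml.lit l => Fml.lit l
  | Fml.not F => if Sat X F then Fml.bot else Fml.top
  | Fml.conj F G => Fml.conj (Reduct X F) (Reduct X G)
  | Fml.disj F G => Fml.disj (Reduct X F) (Reduct X G)

noncomputable def ReductRule (X : Set Lit) (r : Rule) : Rule :=
  ⟨Reduct X r.head, Reduct X r.body⟩

noncomputable def ReductProg (X : Set Lit) (P : Prog) : Prog :=
  ReductRule X '' P

/-- Y is an answer set for P: Y is minimal among consistent sets satisfying the reduct of P w.r.t. Y. -/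
def AnswerSet (Y : Set Lit) (P : Prog) : Prop :=
  Consistent Y ∧ SatProg Y (ReductProg Y P) ∧
    ∀ Z : Set Lit, Consistent Z → SatProg Z (ReductProg Y P) → Z ⊆ Y → Z = Y

def SEModel (P : Prog) (X Y : Set Lit) : Prop :=
  Consistent X ∧ Consistent Y ∧ X ⊆ Y ∧ SatProg Y P ∧ SatProg X (ReductProg Y P)

def StrongEq (P Q : Prog) : Prop :=
  ∀ R : Prog, ∀ Y : Set Lit, AnswerSet Y (P ∪ R) ↔ AnswerSet Y (Q ∪ R)

def Fml.negFree : Fml → Prop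
  | Fml.bot => True
  | Fml.top => True
  | Fml.lit l => ∃ a, l = Lit.pos a
  | Fml.not F => F.negFree
  | Fml.conj F G => F.negFree ∧ G.negFree
  | Fml.disj F G => F.negFree ∧ G.negFree

def ProgNegFree (P : Prog) : Prop := ∀ r ∈ P, r.head.negFree ∧ r.body.negFree

/-- The set of atoms (positive literals) in a set of literals. -/
def PosLits (Z : Set Lit) : Set Lit := {l ∈ Z | ∃ a, l = Lit.pos a}

def AtomsOnly (Z : Set Lit) : Prop := ∀ l ∈ Z, ∃ a, l = Lit.pos a

/-- Classical propositional formulas over an original (`false`) and a primed (`true`)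
copy of the atoms. -/
inductive CF where
  | bot : CF
  | top : CF
  | atom : Bool → ℕ → CF
  | not : CF → CF
  | and : CF → CF → CF
  | or : CF → CF → CF
  | imp : CF → CF → CF

/-- Classical satisfaction: an interpretation is the set of true (copy, atom) pairs. -/
def CSat (I : Set (Bool × ℕ)) : CF → Prop
  | CF.bot => False
  | CF.top => True
  | CF.atom b a => (b, a) ∈ I
  | CF.not φ => ¬ CSat I φ
  | CF.and φ ψ => CSat I φ ∧ CSat I ψ
  | CF.or φ ψ => CSat I φ ∨ CSat I ψ
  | CF.imp φ ψ => CSat I φ → CSat I ψ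

/-- pl: replace not by ¬, ; by ∨, , by ∧ (on ¬-free formulas all literals are atoms). -/
def plF : Fml → CF
  | Fml.bot => CF.bot
  | Fml.top => CF.top
  | Fml.lit (Lit.pos a) => CF.atom false a
  | Fml.lit (Lit.neg _) => CF.bot
  | Fml.not F => CF.not (plF F)
  | Fml.conj F G => CF.and (plF F) (plF G)
  | Fml.disj F G => CF.or (plF F) (plF G)

def plR (r : Rule) : CF := CF.imp (plF r.body) (plF r.head)

/-- φ' : replace every occurrence of an original atom that is not in the scope of ¬
by its primed counterpart. -/
def primeCF : CF → CF
  | CF.bot => CF.bot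
  | CF.top => CF.top
  | CF.atom _ a => CF.atom true a
  | CF.not φ => CF.not φ
  | CF.and φ ψ => CF.and (primeCF φ) (primeCF ψ)
  | CF.or φ ψ => CF.or (primeCF φ) (primeCF ψ)
  | CF.imp φ ψ => CF.imp (primeCF φ) (primeCF ψ)

/-- The theory pl(P) = { pl(r) : r ∈ P } ∪ { pl(r)' : r ∈ P } ∪ { A' ⊃ A : A ∈ 𝒜 }. -/
def plTh (A : Set ℕ) (P : Prog) : Set CF :=
  {φ | ∃ r ∈ P, φ = plR r} ∪ {φ | ∃ r ∈ P, φ = primeCF (plR r)} ∪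
    {φ | ∃ a ∈ A, φ = CF.imp (CF.atom true a) (CF.atom false a)}

/-- Atoms occurring in a formula. -/
def Fml.atoms : Fml → Set ℕ
  | Fml.bot => ∅
  | Fml.top => ∅
  | Fml.lit (Lit.pos a) => {a}
  | Fml.lit (Lit.neg a) => {a}
  | Fml.not F => F.atoms
  | Fml.conj F G => F.atoms ∪ G.atoms
  | Fml.disj F G => F.atoms ∪ G.atoms

def ProgAtoms (P : Prog) : Set ℕ :=
  {a | ∃ r ∈ P, a ∈ r.head.atoms ∪ r.body.atoms}

/-!
Strong equivalence is equality of SE-models. SE-models of `P ∪ R` determine its answer sets;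
conversely, if `(X, Y)` is an SE-model of `P` only, then adding the facts of `Y`, or the facts of
`X` together with the rules `a ← b` for `a, b ∈ Y \ X`, makes `Y` an answer set of exactly one of
`P ∪ R` and `Q ∪ R`.

For ¬-free programs, an interpretation `I` of both copies satisfying `A' ⊃ A` models `pl(P)`
exactly when `(I_new, I_old)` is an SE-model of `P`: the unprimed half of `pl(P)` is `P` read in
`I_old`, and the primed half is the reduct of `P` relative to `I_old` read in `I_new`, because
priming keeps the subformulas under `¬` on the original copy. As ¬-free formulas only see the
atoms they mention, SE-models of `P` and `Q` and models of `pl(P)` and `pl(Q)` correspond.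
-/

variable {A : Set ℕ} {P Q : Prog} {F : Fml} {X X' Y Y' Z S : Set Lit} {I : Set (Bool × ℕ)}

lemma sat_reduct_self (Y : Set Lit) (F : Fml) : Sat Y (Reduct Y F) ↔ Sat Y F := by
  induction F with
  | not F _ => by_cases h : Sat Y F <;> simp [Reduct, Sat, h]
  | conj F G ihF ihG => exact and_congr ihF ihG
  | disj F G ihF ihG => exact or_congr ihF ihG
  | _ => rfl

lemma satProg_reductProg_iff :
    SatProg Z (ReductProg Y P) ↔ ∀ r ∈ P, SatRule Z (ReductRule Y r) :=
  Set.forall_mem_image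

lemma satProg_reductProg_self : SatProg Y (ReductProg Y P) ↔ SatProg Y P := by
  rw [satProg_reductProg_iff]
  exact forall₂_congr fun r _ => imp_congr (sat_reduct_self Y _) (sat_reduct_self Y _)

lemma satProg_union : SatProg Z (P ∪ Q) ↔ SatProg Z P ∧ SatProg Z Q := by
  simp only [SatProg, Set.mem_union, or_imp, forall_and]

lemma satProg_reductProg_union :
    SatProg Z (ReductProg Y (P ∪ Q)) ↔ SatProg Z (ReductProg Y P) ∧ SatProg Z (ReductProg Y Q) := by
  rw [ReductProg, Set.image_union]
  exact satProg_union

lemma seModel_union : SEModel (P ∪ Q) X Y ↔ SEModel P X Y ∧ SEModel Q X Y := by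
  simp only [SEModel, satProg_union, satProg_reductProg_union]
  tauto

lemma answerSet_iff_seModel :
    AnswerSet Y P ↔ SEModel P Y Y ∧ ∀ Z ⊆ Y, SEModel P Z Y → Z = Y := by
  constructor
  · rintro ⟨hY, hYP, hmin⟩
    exact ⟨⟨hY, hY, subset_rfl, satProg_reductProg_self.1 hYP, hYP⟩,
      fun Z hZY hZ => hmin Z hZ.1 hZ.2.2.2.2 hZY⟩
  · rintro ⟨⟨hY, -, -, hYP, hYP'⟩, hmin⟩
    exact ⟨hY, hYP', fun Z hZ hZP hZY => hmin Z hZY ⟨hZ, hY, hZY, hYP, hZP⟩⟩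

lemma strongEq_of_seModel_iff (h : ∀ X Y, SEModel P X Y ↔ SEModel Q X Y) : StrongEq P Q := by
  intro R Y
  simp only [answerSet_iff_seModel, seModel_union, h]

def factsProg (S : Set Lit) : Prog := (fun l => ⟨Fml.lit l, Fml.top⟩) '' S

def chainProg (S : Set Lit) : Prog := Set.image2 (fun a b => ⟨Fml.lit a, Fml.lit b⟩) S S

lemma satProg_reductProg_factsProg : SatProg Z (ReductProg Y (factsProg S)) ↔ S ⊆ Z := by
  simp [satProg_reductProg_iff, factsProg, SatRule, ReductRule, Reduct, Sat, Set.subset_def]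

lemma satProg_reductProg_chainProg :
    SatProg Z (ReductProg Y (chainProg S)) ↔ ∀ a ∈ S, ∀ b ∈ S, b ∈ Z → a ∈ Z := by
  rw [satProg_reductProg_iff, chainProg, Set.forall_mem_image2]
  rfl

lemma answerSet_union_factsProg (hY : Consistent Y) (hYP : SatProg Y P) :
    AnswerSet Y (P ∪ factsProg Y) := by
  refine ⟨hY, satProg_reductProg_union.2 ⟨satProg_reductProg_self.2 hYP,
    satProg_reductProg_factsProg.2 subset_rfl⟩, fun Z _ hZ hZY => ?_⟩
  exact hZY.antisymm (satProg_reductProg_factsProg.1 (satProg_reductProg_union.1 hZ).2)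

/- A model `Z ⊆ Y` of the reduct of the facts of `X` and the chain on `Y \ X` contains `X`,
and as soon as it meets `Y \ X` it contains all of `Y`. -/
lemma eq_of_satProg_factsProg_union_chainProg (hZY : Z ⊆ Y) (hZne : Z ≠ Y)
    (hZ : SatProg Z (ReductProg Y (factsProg X ∪ chainProg (Y \ X)))) : Z = X := by
  obtain ⟨hXZ, hchain⟩ := satProg_reductProg_union.1 hZ
  rw [satProg_reductProg_factsProg] at hXZ
  rw [satProg_reductProg_chainProg] at hchain
  refine Set.Subset.antisymm (fun l hlZ => by_contra fun hlX => hZne ?_) hXZ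
  refine hZY.antisymm fun m hmY => ?_
  by_cases hmX : m ∈ X
  · exact hXZ hmX
  · exact hchain m ⟨hmY, hmX⟩ l ⟨hZY hlZ, hlX⟩ hlZ

lemma SEModel.of_strongEq (h : StrongEq P Q) (hse : SEModel P X Y) : SEModel Q X Y := by
  obtain ⟨hX, hY, hXY, hYP, hXP⟩ := hse
  have hYQ : SatProg Y (ReductProg Y Q) :=
    (satProg_reductProg_union.1 ((h _ Y).1 (answerSet_union_factsProg hY hYP)).2.1).1
  refine ⟨hX, hY, hXY, satProg_reductProg_self.1 hYQ, ?_⟩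
  rcases eq_or_ne X Y with rfl | hXY_ne
  · exact hYQ
  set R := factsProg X ∪ chainProg (Y \ X)
  have hXR : SatProg X (ReductProg Y R) :=
    satProg_reductProg_union.2 ⟨satProg_reductProg_factsProg.2 subset_rfl,
      satProg_reductProg_chainProg.2 fun _ _ _ hb hbX => absurd hbX hb.2⟩
  have hYR : SatProg Y (ReductProg Y R) :=
    satProg_reductProg_union.2 ⟨satProg_reductProg_factsProg.2 hXY,
      satProg_reductProg_chainProg.2 fun _ ha _ _ _ => ha.1⟩
  -- `X` shows that `Y` is not an answer set of `P ∪ R`, hence neither of `Q ∪ R`.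
  have hnot : ¬ AnswerSet Y (Q ∪ R) := fun hQ =>
    hXY_ne (((h R Y).2 hQ).2.2 X hX (satProg_reductProg_union.2 ⟨hXP, hXR⟩) hXY)
  obtain ⟨Z, -, hZ, hZY, hZne⟩ :
      ∃ Z, Consistent Z ∧ SatProg Z (ReductProg Y (Q ∪ R)) ∧ Z ⊆ Y ∧ Z ≠ Y := by
    by_contra! hmin
    exact hnot ⟨hY, satProg_reductProg_union.2 ⟨hYQ, hYR⟩, hmin⟩
  obtain ⟨hZQ, hZR⟩ := satProg_reductProg_union.1 hZ
  rwa [← eq_of_satProg_factsProg_union_chainProg hZY hZne hZR]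

theorem strongEq_iff_seModel_iff : StrongEq P Q ↔ ∀ X Y, SEModel P X Y ↔ SEModel Q X Y :=
  ⟨fun h _ _ => ⟨fun hse => hse.of_strongEq h, fun hse => hse.of_strongEq fun R Y => (h R Y).symm⟩,
    strongEq_of_seModel_iff⟩

def AgreeOn (s : Set ℕ) (X X' : Set Lit) : Prop := ∀ a ∈ s, Lit.pos a ∈ X ↔ Lit.pos a ∈ X'

lemma AgreeOn.mono {s t : Set ℕ} (h : AgreeOn s X X') (hts : t ⊆ s) : AgreeOn t X X' :=
  fun a ha => h a (hts ha)

namespace Fml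

lemma sat_congr (hF : F.negFree) (h : AgreeOn F.atoms X X') : Sat X F ↔ Sat X' F := by
  induction F with
  | bot | top => rfl
  | lit l =>
    obtain ⟨a, rfl⟩ := hF
    exact h a rfl
  | not F ih => exact not_congr (ih hF h)
  | conj F G ihF ihG =>
    exact and_congr (ihF hF.1 (h.mono Set.subset_union_left))
      (ihG hF.2 (h.mono Set.subset_union_right))
  | disj F G ihF ihG =>
    exact or_congr (ihF hF.1 (h.mono Set.subset_union_left))
      (ihG hF.2 (h.mono Set.subset_union_right))

lemma reduct_congr (hF : F.negFree) (h : AgreeOn F.atoms Y Y') : Reduct Y F = Reduct Y' F := by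
  induction F with
  | bot | top | lit => rfl
  | not F _ => exact if_congr (sat_congr hF h) rfl rfl
  | conj F G ihF ihG | disj F G ihF ihG =>
    simp only [Reduct]
    rw [ihF hF.1 (h.mono Set.subset_union_left), ihG hF.2 (h.mono Set.subset_union_right)]

lemma negFree_reduct (hF : F.negFree) : (Reduct Y F).negFree := by
  induction F with
  | bot | top | lit => exact hF
  | not F _ => by_cases hs : Sat Y F <;> simp [Reduct, Fml.negFree, hs]
  | conj F G ihF ihG | disj F G ihF ihG => exact ⟨ihF hF.1, ihG hF.2⟩

lemma atoms_reduct_subset (Y : Set Lit) (F : Fml) : (Reduct Y F).atoms ⊆ F.atoms := by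
  induction F with
  | bot | top | lit => exact subset_rfl
  | not F _ => by_cases hs : Sat Y F <;> simp [Reduct, Fml.atoms, hs]
  | conj F G ihF ihG | disj F G ihF ihG => exact Set.union_subset_union ihF ihG

end Fml

lemma satProg_congr (hP : ProgNegFree P) (h : AgreeOn (ProgAtoms P) X X') :
    SatProg X P ↔ SatProg X' P :=
  forall₂_congr fun r hr =>
    imp_congr (Fml.sat_congr (hP r hr).2 (h.mono fun _ ha => ⟨r, hr, Or.inr ha⟩))
      (Fml.sat_congr (hP r hr).1 (h.mono fun _ ha => ⟨r, hr, Or.inl ha⟩))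

lemma satProg_reductProg_congr (hP : ProgNegFree P) (hX : AgreeOn (ProgAtoms P) X X')
    (hY : AgreeOn (ProgAtoms P) Y Y') :
    SatProg X (ReductProg Y P) ↔ SatProg X' (ReductProg Y' P) := by
  simp only [satProg_reductProg_iff]
  refine forall₂_congr fun r hr => ?_
  have hhead : AgreeOn r.head.atoms X X' := hX.mono fun _ ha => ⟨r, hr, Or.inl ha⟩
  have hbody : AgreeOn r.body.atoms X X' := hX.mono fun _ ha => ⟨r, hr, Or.inr ha⟩
  rw [ReductRule, Fml.reduct_congr (hP r hr).1 (hY.mono fun _ ha => ⟨r, hr, Or.inl ha⟩),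
    Fml.reduct_congr (hP r hr).2 (hY.mono fun _ ha => ⟨r, hr, Or.inr ha⟩)]
  exact imp_congr
    (Fml.sat_congr (Fml.negFree_reduct (hP r hr).2) (hbody.mono (Fml.atoms_reduct_subset _ _)))
    (Fml.sat_congr (Fml.negFree_reduct (hP r hr).1) (hhead.mono (Fml.atoms_reduct_subset _ _)))

def SESat (P : Prog) (X Y : Set Lit) : Prop := SatProg Y P ∧ SatProg X (ReductProg Y P)

lemma seModel_iff : SEModel P X Y ↔ Consistent X ∧ Consistent Y ∧ X ⊆ Y ∧ SESat P X Y :=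
  Iff.rfl

lemma sESat_congr (hP : ProgNegFree P) (hX : AgreeOn (ProgAtoms P) X X')
    (hY : AgreeOn (ProgAtoms P) Y Y') : SESat P X Y ↔ SESat P X' Y' :=
  and_congr (satProg_congr hP hY) (satProg_reductProg_congr hP hX hY)

lemma Consistent.subset (hY : Consistent Y) (hXY : X ⊆ Y) : Consistent X :=
  fun a h => hY a ⟨hXY h.1, hXY h.2⟩

def copyLits (b : Bool) (I : Set (Bool × ℕ)) : Set Lit := {l | ∃ a, l = Lit.pos a ∧ (b, a) ∈ I}

@[simp]
lemma pos_mem_copyLits {b : Bool} {a : ℕ} : Lit.pos a ∈ copyLits b I ↔ (b, a) ∈ I := by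
  simp [copyLits]

lemma consistent_copyLits (b : Bool) (I : Set (Bool × ℕ)) : Consistent (copyLits b I) := by
  rintro a ⟨-, ⟨_, h, -⟩⟩
  cases h

def twoCopyInterp (X Y : Set Lit) : Set (Bool × ℕ) := {p | Lit.pos p.2 ∈ cond p.1 X Y}

lemma csat_plF (hF : F.negFree) : CSat I (plF F) ↔ Sat (copyLits false I) F := by
  induction F with
  | bot | top => rfl
  | lit l =>
    obtain ⟨a, rfl⟩ := hF
    exact pos_mem_copyLits.symm
  | not F ih => exact not_congr (ih hF)
  | conj F G ihF ihG => exact and_congr (ihF hF.1) (ihG hF.2)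
  | disj F G ihF ihG => exact or_congr (ihF hF.1) (ihG hF.2)

lemma csat_primeCF_plF (hF : F.negFree) :
    CSat I (primeCF (plF F)) ↔ Sat (copyLits true I) (Reduct (copyLits false I) F) := by
  induction F with
  | bot | top => rfl
  | lit l =>
    obtain ⟨a, rfl⟩ := hF
    exact pos_mem_copyLits.symm
  | not F _ =>
    change ¬ CSat I (plF F) ↔ _
    rw [csat_plF (F := F) hF]
    by_cases hs : Sat (copyLits false I) F <;> simp [Reduct, Sat, hs]
  | conj F G ihF ihG => exact and_congr (ihF hF.1) (ihG hF.2)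
  | disj F G ihF ihG => exact or_congr (ihF hF.1) (ihG hF.2)

lemma models_plTh_iff (hP : ProgNegFree P) :
    (∀ φ ∈ plTh A P, CSat I φ) ↔
      SESat P (copyLits true I) (copyLits false I) ∧ ∀ a ∈ A, (true, a) ∈ I → (false, a) ∈ I := by
  have hrules : (∀ r ∈ P, CSat I (plR r)) ↔ SatProg (copyLits false I) P :=
    forall₂_congr fun r hr => imp_congr (csat_plF (hP r hr).2) (csat_plF (hP r hr).1)
  have hprimed : (∀ r ∈ P, CSat I (primeCF (plR r))) ↔
      SatProg (copyLits true I) (ReductProg (copyLits false I) P) := by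
    rw [satProg_reductProg_iff]
    exact forall₂_congr fun r hr =>
      imp_congr (csat_primeCF_plF (hP r hr).2) (csat_primeCF_plF (hP r hr).1)
  rw [SESat, ← hrules, ← hprimed]
  simp only [plTh, Set.mem_union, Set.mem_ofPred_eq, or_imp, forall_and, forall_exists_index,
    and_imp, and_assoc, forall_comm (α := CF), forall_eq, CSat]

lemma models_plTh_iff_seModel (hP : ProgNegFree P) (hPA : ProgAtoms P ⊆ A) :
    (∀ φ ∈ plTh A P, CSat I φ) ↔ (∀ a ∈ A, (true, a) ∈ I → (false, a) ∈ I) ∧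
      SEModel P (copyLits true I ∩ copyLits false I) (copyLits false I) := by
  rw [models_plTh_iff hP, and_comm]
  refine and_congr_right fun hA => ?_
  have hnew : AgreeOn (ProgAtoms P) (copyLits true I) (copyLits true I ∩ copyLits false I) :=
    fun a ha => by simpa using fun h => hA a (hPA ha) h
  rw [sESat_congr hP hnew fun _ _ => Iff.rfl, seModel_iff]
  have hcons := consistent_copyLits false I
  simp only [hcons, hcons.subset Set.inter_subset_right, Set.inter_subset_right, true_and]

lemma sESat_iff_models_twoCopyInterp (A : Set ℕ) (hP : ProgNegFree P) (hXY : X ⊆ Y) :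
    SESat P X Y ↔ ∀ φ ∈ plTh A P, CSat (twoCopyInterp X Y) φ := by
  have hprimed : ∀ a ∈ A, (true, a) ∈ twoCopyInterp X Y → (false, a) ∈ twoCopyInterp X Y :=
    fun _ _ h => hXY h
  rw [models_plTh_iff hP, and_iff_left hprimed]
  exact sESat_congr hP (fun _ _ => by simp [twoCopyInterp]) (fun _ _ => by simp [twoCopyInterp])

theorem stmt16_general (A : Set ℕ) (P Q : Prog) (hPA : ProgAtoms P ⊆ A) (hQA : ProgAtoms Q ⊆ A)
    (hPnf : ProgNegFree P) (hQnf : ProgNegFree Q) :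
    StrongEq P Q ↔
      ¬ ∃ I : Set (Bool × ℕ),
          ¬ ((∀ φ ∈ plTh A P, CSat I φ) ↔ (∀ φ ∈ plTh A Q, CSat I φ)) := by
  rw [strongEq_iff_seModel_iff, not_exists_not]
  constructor
  · intro h I
    rw [models_plTh_iff_seModel hPnf hPA, models_plTh_iff_seModel hQnf hQA, h]
  · intro h X Y
    simp only [seModel_iff]
    refine and_congr_right fun _ => and_congr_right fun _ => and_congr_right fun hXY => ?_
    rw [sESat_iff_models_twoCopyInterp A hPnf hXY, sESat_iff_models_twoCopyInterp A hQnf hXY]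
    exact h _

/-- finite ¬-free nested programs P and Q (over atoms A) are strongly
equivalent iff the classical formula pl(P) ≢ pl(Q) is unsatisfiable. -/
theorem stmt16 (A : Set ℕ) (P Q : Prog) (hPfin : P.Finite) (hQfin : Q.Finite)
    (hAfin : A.Finite) (hPA : ProgAtoms P ⊆ A) (hQA : ProgAtoms Q ⊆ A)
    (hPnf : ProgNegFree P) (hQnf : ProgNegFree Q) :
    StrongEq P Q ↔
      ¬ ∃ I : Set (Bool × ℕ),
          ¬ ((∀ φ ∈ plTh A P, CSat I φ) ↔ (∀ φ ∈ plTh A Q, CSat I φ)) :=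
  stmt16_general A P Q hPA hQA hPnf hQnf
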